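/- arXiv:2601.18463 — 3 statements merged into one kernel-verified Lean document; each statement's English description precedes it below -/
import Mathlib

section
/- For all real numbers c and c̄, one has 0 ≤ (2 − √3)·(c − c̄)^4 ≤ c^4 − c̄^4 − 4c̄^3·(c − c̄). -/
theorem stmt_0 (c cb : ℝ) :
    0 ≤ (2 - Real.sqrt 3) * (c - cb)^4 ∧
    (2 - Real.sqrt 3) * (c - cb)^4 ≤ c^4 - cb^4 - 4 * cb^3 * (c - cb) := by
  have h3 : Real.sqrt 3 ^ 2 = 3 := Real.sq_sqrt (by norm_num)
  have h1 : (1:ℝ) ≤ Real.sqrt 3 := by nlinarith [Real.sqrt_nonneg 3]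
  have h2 : Real.sqrt 3 ≤ 2 := by nlinarith [Real.sqrt_nonneg 3]
  constructor
  · exact mul_nonneg (by linarith) (by positivity)
  · nlinarith [sq_nonneg (c - cb), sq_nonneg ((c-cb)*(c+cb)), sq_nonneg ((c-cb)*cb),
      sq_nonneg ((c-cb)*(c + Real.sqrt 3 * cb)), sq_nonneg (c+cb), mul_self_nonneg ((c-cb)^2)]
end

section
/- For any real numbers c, c̄ one has (2 − √3)·(c − c̄)^4 ≤ 4·η where η := (1/4)c^4 − (1/4)c̄^4 − c̄^3(c − c̄); hence (c − c̄)^4 ≤ K·η with K = 4/(2 − √3) = 4(2 + √3). -/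
theorem stmt_9 (c cb : ℝ) :
    (2 - Real.sqrt 3) * (c - cb)^4
        ≤ 4 * ((1/4) * c^4 - (1/4) * cb^4 - cb^3 * (c - cb)) ∧
    (c - cb)^4
        ≤ (4 * (2 + Real.sqrt 3)) * ((1/4) * c^4 - (1/4) * cb^4 - cb^3 * (c - cb)) ∧
    4 / (2 - Real.sqrt 3) = 4 * (2 + Real.sqrt 3) := by
  have hs : Real.sqrt 3 ^ 2 = 3 := Real.sq_sqrt (by norm_num)
  have h17 : Real.sqrt 3 ≥ 1.7 := by
    nlinarith [Real.sqrt_nonneg 3, hs]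
  have h18 : Real.sqrt 3 ≤ 1.8 := by
    nlinarith [Real.sqrt_nonneg 3, hs]
  have h1 : (2 - Real.sqrt 3) * (c - cb)^4
      ≤ 4 * ((1/4) * c^4 - (1/4) * cb^4 - cb^3 * (c - cb)) := by
    nlinarith [sq_nonneg ((c - cb) * (3*cb + c - cb)), sq_nonneg (c - cb), sq_nonneg ((c-cb)^2), h17, mul_nonneg (sq_nonneg ((c-cb)^2)) (sub_nonneg.2 h17.le)]
  refine ⟨h1, ?_, ?_⟩
  · have hpos : (0:ℝ) < 2 + Real.sqrt 3 := by nlinarith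
    have key := mul_le_mul_of_nonneg_left h1 hpos.le
    have e : (2 + Real.sqrt 3) * ((2 - Real.sqrt 3) * (c - cb)^4) = (c - cb)^4 := by
      have : (2 + Real.sqrt 3) * (2 - Real.sqrt 3) = 1 := by nlinarith
      rw [← mul_assoc, this, one_mul]
    linarith [key, e.ge]
  · have hne : 2 - Real.sqrt 3 ≠ 0 := by nlinarith
    field_simp
    nlinarith [hs]
end

section
/- For smooth vector fields u, ū : ℝ^d → ℝ^d, the pointwise identity −[(u·∇)u − (ū·∇)ū]·(u − ū) − (1/2)[(∇·u)u − (∇·ū)ū]·(u − ū) = −∇·[ (|u − ū|^2/2) u ] − ((u − ū)·∇)ū·(u − ū) − (1/2)(∇·(u − ū)) ū·(u − ū) holds. -/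
/-!
Write `w = u - ū`. Splitting `u_j ∂_j u_i - ū_j ∂_j ū_i = u_j ∂_j w_i + w_j ∂_j ū_i`, the first part
tested against `w` is `u · ∇(|w|²/2) = ∇ · ((|w|²/2) u) - (∇ · u) |w|²/2` by the product rule.
Since `u · w - |w|² = ū · w`, the remaining divergence terms combine to `(1/2) (∇ · w) ū · w`.
-/

open scoped BigOperators

/-- Partial derivative of a scalar field on `ℝ^d` in the `j`-th coordinate direction. -/
noncomputable def pd {d : ℕ} (f : (Fin d → ℝ) → ℝ) (j : Fin d) (x : Fin d → ℝ) : ℝ :=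
  fderiv ℝ f x (Pi.single j 1)

/-- Divergence of a vector field on `ℝ^d`. -/
noncomputable def dvg {d : ℕ} (v : (Fin d → ℝ) → (Fin d → ℝ)) (x : Fin d → ℝ) : ℝ :=
  ∑ i, pd (fun y => v y i) i x

section PartialDerivative

variable {d : ℕ} {f g : (Fin d → ℝ) → ℝ} {j : Fin d} {x : Fin d → ℝ}

theorem pd_sub (hf : DifferentiableAt ℝ f x) (hg : DifferentiableAt ℝ g x) :
    pd (fun y => f y - g y) j x = pd f j x - pd g j x := by
  simp [pd, fderiv_fun_sub hf hg]

theorem pd_mul (hf : DifferentiableAt ℝ f x) (hg : DifferentiableAt ℝ g x) :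
    pd (fun y => f y * g y) j x = pd f j x * g x + f x * pd g j x := by
  simp only [pd, fderiv_fun_mul hf hg, add_apply, smul_apply, smul_eq_mul]
  ring

theorem pd_div_const (hf : DifferentiableAt ℝ f x) (c : ℝ) :
    pd (fun y => f y / c) j x = pd f j x / c := by
  simp [pd, div_eq_mul_inv, fderiv_mul_const hf, mul_comm]

theorem pd_sum {ι : Type*} (s : Finset ι) {F : ι → (Fin d → ℝ) → ℝ}
    (hF : ∀ k ∈ s, DifferentiableAt ℝ (F k) x) :
    pd (fun y => ∑ k ∈ s, F k y) j x = ∑ k ∈ s, pd (F k) j x := by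
  simp [pd, fderiv_fun_sum hF]

theorem pd_half_sum_sq {w : (Fin d → ℝ) → (Fin d → ℝ)}
    (hw : ∀ k, DifferentiableAt ℝ (fun y => w y k) x) :
    pd (fun y => (∑ k, w y k ^ 2) / 2) j x = ∑ k, w x k * pd (fun y => w y k) j x := by
  have hsq : ∀ k, pd (fun y => w y k ^ 2) j x = 2 * (w x k * pd (fun y => w y k) j x) := by
    intro k
    simp only [sq, pd_mul (hw k) (hw k)]
    ring
  have hwsq : ∀ k ∈ Finset.univ, DifferentiableAt ℝ (fun y => w y k ^ 2) x :=
    fun k _ => (hw k).pow 2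
  rw [pd_div_const (DifferentiableAt.fun_sum hwsq), pd_sum _ hwsq]
  simp only [hsq, ← Finset.mul_sum]
  ring

theorem dvg_sub {v w : (Fin d → ℝ) → (Fin d → ℝ)}
    (hv : ∀ k, DifferentiableAt ℝ (fun y => v y k) x)
    (hw : ∀ k, DifferentiableAt ℝ (fun y => w y k) x) :
    dvg (fun y k => v y k - w y k) x = dvg v x - dvg w x := by
  simp only [dvg, pd_sub (hv _) (hw _), Finset.sum_sub_distrib]

end PartialDerivative

/-- `A`, `B` stand for `u x`, `ū x` and `P i j`, `Q i j` for `∂_j u_i`, `∂_j ū_i` at `x`. -/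
theorem convective_rearrangement {d : ℕ} (A B : Fin d → ℝ) (P Q : Fin d → Fin d → ℝ) :
    -(∑ i, (∑ j, (A j * P i j - B j * Q i j)) * (A i - B i))
      - (1/2) * ∑ i, ((∑ j, P j j) * A i - (∑ j, Q j j) * B i) * (A i - B i)
    = -(∑ i, ((∑ k, (A k - B k) * (P k i - Q k i)) * A i
          + ((∑ k, (A k - B k)^2) / 2) * P i i))
      - (∑ i, (∑ j, (A j - B j) * Q i j) * (A i - B i))
      - (1/2) * (∑ i, P i i - ∑ i, Q i i) * (∑ i, B i * (A i - B i)) := by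
  have hconv : ∑ i, (∑ j, (A j * P i j - B j * Q i j)) * (A i - B i)
      = ∑ i, (∑ k, (A k - B k) * (P k i - Q k i)) * A i
        + ∑ i, (∑ j, (A j - B j) * Q i j) * (A i - B i) := by
    have hswap : ∑ i, (∑ k, (A k - B k) * (P k i - Q k i)) * A i
        = ∑ i, ∑ j, (A i - B i) * (P i j - Q i j) * A j := by
      simp only [Finset.sum_mul]
      exact Finset.sum_comm
    rw [hswap]
    simp only [Finset.sum_mul, ← Finset.sum_add_distrib]
    exact Finset.sum_congr rfl fun i _ => Finset.sum_congr rfl fun j _ => by ring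
  have hsq : ∑ i, (A i - B i) ^ 2 = ∑ i, A i * (A i - B i) - ∑ i, B i * (A i - B i) := by
    rw [← Finset.sum_sub_distrib]
    exact Finset.sum_congr rfl fun i _ => by ring
  have htrace : ∑ i, ((∑ j, P j j) * A i - (∑ j, Q j j) * B i) * (A i - B i)
      = (∑ j, P j j) * ∑ i, A i * (A i - B i) - (∑ j, Q j j) * ∑ i, B i * (A i - B i) := by
    rw [Finset.mul_sum, Finset.mul_sum, ← Finset.sum_sub_distrib]
    exact Finset.sum_congr rfl fun i _ => by ring
  rw [hconv, htrace, Finset.sum_add_distrib, ← Finset.mul_sum, hsq]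
  ring

theorem stmt_14 (d : ℕ) (u ub : (Fin d → ℝ) → (Fin d → ℝ))
    (hu : Differentiable ℝ u) (hub : Differentiable ℝ ub) (x : Fin d → ℝ) :
    -(∑ i, (∑ j, (u x j * pd (fun y => u y i) j x
                  - ub x j * pd (fun y => ub y i) j x)) * (u x i - ub x i))
      - (1/2) * ∑ i, (dvg u x * u x i - dvg ub x * ub x i) * (u x i - ub x i)
    = -(∑ i, pd (fun y => ((∑ k, (u y k - ub y k)^2) / 2) * u y i) i x)
      - (∑ i, (∑ j, (u x j - ub x j) * pd (fun y => ub y i) j x) * (u x i - ub x i))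
      - (1/2) * dvg (fun y => fun k => u y k - ub y k) x
          * ∑ i, ub x i * (u x i - ub x i) := by
  have hu' : ∀ k, DifferentiableAt ℝ (fun y => u y k) x := fun k => differentiable_pi.mp hu k x
  have hub' : ∀ k, DifferentiableAt ℝ (fun y => ub y k) x := fun k => differentiable_pi.mp hub k x
  have hw : ∀ k, DifferentiableAt ℝ (fun y => u y k - ub y k) x := fun k => (hu' k).sub (hub' k)
  have hflux : ∀ i, pd (fun y => ((∑ k, (u y k - ub y k) ^ 2) / 2) * u y i) i x
      = (∑ k, (u x k - ub x k) * (pd (fun y => u y k) i x - pd (fun y => ub y k) i x)) * u x i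
        + ((∑ k, (u x k - ub x k) ^ 2) / 2) * pd (fun y => u y i) i x := by
    intro i
    have hhalf : DifferentiableAt ℝ (fun y => (∑ k, (u y k - ub y k) ^ 2) / 2) x := by
      fun_prop
    rw [pd_mul hhalf (hu' i),
      pd_half_sum_sq (w := fun y k => u y k - ub y k) hw]
    simp only [pd_sub (hu' _) (hub' _)]
  simp only [hflux, dvg_sub hu' hub']
  exact convective_rearrangement (u x) (ub x)
    (fun i j => pd (fun y => u y i) j x) (fun i j => pd (fun y => ub y i) j x)
end
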